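/- arXiv:2106.05698 — 2 statements merged into one kernel-verified Lean document; each statement's English description precedes it below -/
import Mathlib

section
/- For any groups G and H, the centralizer dimension of G × H equals the sum of the centralizer dimensions of G and H (where all dimensions are assumed finite). -/
/-- `G` admits a strictly descending chain of centralizers of subsets of length `n`. -/
def CentralizerChain (G : Type*) [Group G] (n : ℕ) : Prop :=
  ∃ A : Fin (n + 1) → Set G, ∀ i : Fin n,
    Subgroup.centralizer (A i.succ) < Subgroup.centralizer (A i.castSucc)

/-- `G` has centralizer dimension exactly `k`: there is a strictly descending chain of
centralizers of length `k` but none of length `k + 1`. -/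
def HasCdim (G : Type*) [Group G] (k : ℕ) : Prop :=
  CentralizerChain G k ∧ ¬ CentralizerChain G (k + 1)

section Helpers

variable {G H : Type*} [Group G] [Group H]

lemma my_centralizer_pair (S : Set G) (T : Set H) :
    Subgroup.centralizer ((fun g => ((g, 1) : G × H)) '' S ∪ (fun h => ((1 : G), h)) '' T)
      = (Subgroup.centralizer S).prod (Subgroup.centralizer T) := by
  ext ⟨g, h⟩
  simp only [Subgroup.mem_centralizer_iff, Subgroup.mem_prod, Set.mem_union, Set.mem_image,
    Prod.ext_iff, Prod.fst_mul, Prod.snd_mul]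
  constructor
  · intro hc
    constructor
    · intro s hs
      exact (hc (s, 1) (Or.inl ⟨s, hs, rfl, rfl⟩)).1
    · intro t ht
      exact (hc (1, t) (Or.inr ⟨t, ht, rfl, rfl⟩)).2
  · rintro ⟨h1, h2⟩ ⟨x, y⟩ (⟨s, hs, hs1, hs2⟩ | ⟨t, ht, ht1, ht2⟩)
    · subst hs1; subst hs2; exact ⟨h1 s hs, by simp⟩
    · subst ht1; subst ht2; exact ⟨by simp, h2 t ht⟩

lemma my_centralizer_eq_prod (S : Set (G × H)) :
    Subgroup.centralizer S
      = (Subgroup.centralizer (Prod.fst '' S)).prod (Subgroup.centralizer (Prod.snd '' S)) := by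
  ext ⟨g, h⟩
  simp only [Subgroup.mem_centralizer_iff, Subgroup.mem_prod, Set.mem_image, Prod.ext_iff,
    Prod.fst_mul, Prod.snd_mul]
  constructor
  · intro hc
    constructor
    · rintro a ⟨p, hp, rfl⟩; exact (hc p hp).1
    · rintro b ⟨p, hp, rfl⟩; exact (hc p hp).2
  · rintro ⟨h1, h2⟩ p hp
    exact ⟨h1 p.1 ⟨p, hp, rfl⟩, h2 p.2 ⟨p, hp, rfl⟩⟩

lemma my_prod_le_iff {K K' : Subgroup G} {L L' : Subgroup H} :
    K.prod L ≤ K'.prod L' ↔ K ≤ K' ∧ L ≤ L' := by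
  constructor
  · intro hle
    constructor
    · intro x hx; exact (hle (show (x, 1) ∈ K.prod L from ⟨hx, one_mem _⟩)).1
    · intro y hy; exact (hle (show (1, y) ∈ K.prod L from ⟨one_mem _, hy⟩)).2
  · rintro ⟨h1, h2⟩; exact Subgroup.prod_mono h1 h2

lemma my_prod_lt_left {K K' : Subgroup G} (L : Subgroup H) (h : K < K') :
    K.prod L < K'.prod L :=
  lt_of_le_of_ne (Subgroup.prod_mono h.le le_rfl) (by
    intro he
    exact h.ne (le_antisymm h.le ((my_prod_le_iff.mp he.ge).1)))

lemma my_prod_lt_right (K : Subgroup G) {L L' : Subgroup H} (h : L < L') :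
    K.prod L < K.prod L' :=
  lt_of_le_of_ne (Subgroup.prod_mono le_rfl h.le) (by
    intro he
    exact h.ne (le_antisymm h.le ((my_prod_le_iff.mp he.ge).2)))

lemma my_chain_snoc {a : ℕ} {P : Fin (a + 1) → Set G}
    (hP : ∀ i : Fin a, Subgroup.centralizer (P i.succ) < Subgroup.centralizer (P i.castSucc))
    {S : Set G} (hS : Subgroup.centralizer S < Subgroup.centralizer (P (Fin.last a))) :
    ∀ i : Fin (a + 1), Subgroup.centralizer ((Fin.snoc P S : Fin (a+2) → Set G) i.succ)
      < Subgroup.centralizer ((Fin.snoc P S : Fin (a+2) → Set G) i.castSucc) := by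
  intro i
  refine Fin.lastCases ?_ ?_ i
  · rw [Fin.succ_last, Fin.snoc_last, Fin.snoc_castSucc]
    exact hS
  · intro j
    rw [Fin.succ_castSucc, Fin.snoc_castSucc, Fin.snoc_castSucc]
    exact hP j

lemma my_chain_update {a : ℕ} {P : Fin (a + 1) → Set G}
    (hP : ∀ i : Fin a, Subgroup.centralizer (P i.succ) < Subgroup.centralizer (P i.castSucc))
    {S : Set G} (hS : Subgroup.centralizer S = Subgroup.centralizer (P (Fin.last a))) :
    ∀ i : Fin a, Subgroup.centralizer (Function.update P (Fin.last a) S i.succ)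
      < Subgroup.centralizer (Function.update P (Fin.last a) S i.castSucc) := by
  intro i
  rw [Function.update_of_ne (Fin.castSucc_lt_last i).ne]
  by_cases h : i.succ = Fin.last a
  · rw [h, Function.update_self, hS, ← h]
    exact hP i
  · rw [Function.update_of_ne h]
    exact hP i

lemma my_chain_decomp :
    ∀ (N : ℕ) (A : Fin (N + 1) → Set (G × H)),
      (∀ i : Fin N, Subgroup.centralizer (A i.succ) < Subgroup.centralizer (A i.castSucc)) →
      ∃ a b, N ≤ a + b ∧
        (∃ P : Fin (a + 1) → Set G,
          (∀ i : Fin a, Subgroup.centralizer (P i.succ) < Subgroup.centralizer (P i.castSucc)) ∧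
          Subgroup.centralizer (P (Fin.last a))
            = Subgroup.centralizer (Prod.fst '' A (Fin.last N))) ∧
        (∃ Q : Fin (b + 1) → Set H,
          (∀ i : Fin b, Subgroup.centralizer (Q i.succ) < Subgroup.centralizer (Q i.castSucc)) ∧
          Subgroup.centralizer (Q (Fin.last b))
            = Subgroup.centralizer (Prod.snd '' A (Fin.last N))) := by
  intro N
  induction N with
  | zero =>
    intro A _
    exact ⟨0, 0, le_refl 0,
      ⟨fun _ => Prod.fst '' A (Fin.last 0), fun i => i.elim0, rfl⟩,
      ⟨fun _ => Prod.snd '' A (Fin.last 0), fun i => i.elim0, rfl⟩⟩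
  | succ N ih =>
    intro A hA
    obtain ⟨a, b, hab, ⟨P, hP, hPlast⟩, ⟨Q, hQ, hQlast⟩⟩ :=
      ih (fun i => A i.castSucc) (fun i => by
        simp only [← Fin.succ_castSucc]
        exact hA i.castSucc)
    have lt := hA (Fin.last N)
    rw [Fin.succ_last, my_centralizer_eq_prod, my_centralizer_eq_prod] at lt
    have hKle := (my_prod_le_iff.mp lt.le).1
    have hLle := (my_prod_le_iff.mp lt.le).2
    rcases hKle.lt_or_eq with hK | hK <;> rcases hLle.lt_or_eq with hL | hL
    · refine ⟨a + 1, b + 1, by omega,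
        ⟨Fin.snoc P (Prod.fst '' A (Fin.last (N + 1))),
          my_chain_snoc hP (hPlast ▸ hK), by rw [Fin.snoc_last]⟩,
        ⟨Fin.snoc Q (Prod.snd '' A (Fin.last (N + 1))),
          my_chain_snoc hQ (hQlast ▸ hL), by rw [Fin.snoc_last]⟩⟩
    · refine ⟨a + 1, b, by omega,
        ⟨Fin.snoc P (Prod.fst '' A (Fin.last (N + 1))),
          my_chain_snoc hP (hPlast ▸ hK), by rw [Fin.snoc_last]⟩,
        ⟨Function.update Q (Fin.last b) (Prod.snd '' A (Fin.last (N + 1))),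
          my_chain_update hQ (by rw [hQlast]; exact hL),
          by rw [Function.update_self]⟩⟩
    · refine ⟨a, b + 1, by omega,
        ⟨Function.update P (Fin.last a) (Prod.fst '' A (Fin.last (N + 1))),
          my_chain_update hP (by rw [hPlast]; exact hK),
          by rw [Function.update_self]⟩,
        ⟨Fin.snoc Q (Prod.snd '' A (Fin.last (N + 1))),
          my_chain_snoc hQ (hQlast ▸ hL), by rw [Fin.snoc_last]⟩⟩
    · exact absurd (by rw [hK, hL]) lt.ne


lemma my_chain_mono {k a : ℕ} (h : k ≤ a) (hc : CentralizerChain G a) :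
    CentralizerChain G k := by
  obtain ⟨A, hA⟩ := hc
  refine ⟨fun i => A (Fin.castLE (by omega) i), fun i => ?_⟩
  have hi : (i : ℕ) < a := lt_of_lt_of_le i.isLt h
  have e1 : Fin.castLE (by omega : k + 1 ≤ a + 1) i.succ = (⟨(i : ℕ), hi⟩ : Fin a).succ := by
    apply Fin.ext; simp
  have e2 : Fin.castLE (by omega : k + 1 ≤ a + 1) i.castSucc
      = (⟨(i : ℕ), hi⟩ : Fin a).castSucc := by
    apply Fin.ext; simp
  simp only [e1, e2]
  exact hA ⟨(i : ℕ), hi⟩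

lemma my_chain_prod {m n : ℕ} (hcA : CentralizerChain G m) (hcB : CentralizerChain H n) :
    CentralizerChain (G × H) (m + n) := by
  obtain ⟨A, hA⟩ := hcA
  obtain ⟨B, hB⟩ := hcB
  refine ⟨fun i => (fun g => ((g, 1) : G × H)) '' A ⟨min (i : ℕ) m, by omega⟩
      ∪ (fun h => ((1 : G), h)) '' B ⟨(i : ℕ) - m, by omega⟩, fun i => ?_⟩
  rw [my_centralizer_pair, my_centralizer_pair]
  rcases lt_or_ge (i : ℕ) m with hi | hi
  · have e1 : (⟨min (i.succ : ℕ) m, by omega⟩ : Fin (m + 1)) = (⟨(i : ℕ), hi⟩ : Fin m).succ := by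
      apply Fin.ext; simp only [Fin.val_succ, Fin.coe_castSucc]; try omega
    have e2 : (⟨min (i.castSucc : ℕ) m, by omega⟩ : Fin (m + 1))
        = (⟨(i : ℕ), hi⟩ : Fin m).castSucc := by
      apply Fin.ext; simp only [Fin.val_succ, Fin.coe_castSucc]; try omega
    have e3 : (⟨(i.succ : ℕ) - m, by omega⟩ : Fin (n + 1))
        = (⟨(i.castSucc : ℕ) - m, by omega⟩ : Fin (n + 1)) := by
      apply Fin.ext; simp only [Fin.val_succ, Fin.coe_castSucc]; try omega
    rw [e1, e2, e3]
    exact my_prod_lt_left _ (hA ⟨(i : ℕ), hi⟩)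
  · have hi' : (i : ℕ) - m < n := by omega
    have e1 : (⟨min (i.succ : ℕ) m, by omega⟩ : Fin (m + 1))
        = (⟨min (i.castSucc : ℕ) m, by omega⟩ : Fin (m + 1)) := by
      apply Fin.ext; simp only [Fin.val_succ, Fin.coe_castSucc]; try omega
    have e2 : (⟨(i.succ : ℕ) - m, by omega⟩ : Fin (n + 1)) = (⟨(i : ℕ) - m, hi'⟩ : Fin n).succ := by
      apply Fin.ext; simp only [Fin.val_succ, Fin.coe_castSucc]; try omega
    have e3 : (⟨(i.castSucc : ℕ) - m, by omega⟩ : Fin (n + 1))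
        = (⟨(i : ℕ) - m, hi'⟩ : Fin n).castSucc := by
      apply Fin.ext; simp only [Fin.val_succ, Fin.coe_castSucc]; try omega
    rw [e1, e2, e3]
    exact my_prod_lt_right _ (hB ⟨(i : ℕ) - m, hi'⟩)

end Helpers

/-- The centralizer dimension of a direct product is the sum of the centralizer
dimensions of the factors (all dimensions finite). -/
theorem hasCdim_prod {G H : Type*} [Group G] [Group H] {m n : ℕ}
    (hG : HasCdim G m) (hH : HasCdim H n) : HasCdim (G × H) (m + n) := by
  refine ⟨my_chain_prod hG.1 hH.1, ?_⟩
  rintro ⟨C, hC⟩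
  obtain ⟨a, b, hab, ⟨P, hP, -⟩, ⟨Q, hQ, -⟩⟩ := my_chain_decomp (m + n + 1) C hC
  rcases (by omega : m + 1 ≤ a ∨ n + 1 ≤ b) with h | h
  · exact hG.2 (my_chain_mono h ⟨P, hP⟩)
  · exact hH.2 (my_chain_mono h ⟨Q, hQ⟩)
end

section
/- For n ≥ 8, the alternating group Alt(n) admits a strictly descending chain of centralizers of length at least ⌊n/4⌋. Consequently, for every k there exists n such that Alt(n) has centralizer dimension greater than k. -/
namespace AltCentralizerAux

/-- The `j`-th commuting involution: product of two disjoint transpositions. -/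
def AltX (n j : ℕ) : Equiv.Perm (Fin n) :=
  if h : 4*j+3 < n then
    Equiv.swap ⟨4*j, by omega⟩ ⟨4*j+1, by omega⟩ *
      Equiv.swap ⟨4*j+2, by omega⟩ ⟨4*j+3, by omega⟩
  else 1

/-- A 3-cycle inside the support of `AltX n i`. -/
def AltC (n i : ℕ) : Equiv.Perm (Fin n) :=
  if h : 4*i+3 < n then
    Equiv.swap ⟨4*i, by omega⟩ ⟨4*i+1, by omega⟩ *
      Equiv.swap ⟨4*i+1, by omega⟩ ⟨4*i+2, by omega⟩
  else 1

lemma AltX_sign (n j : ℕ) : Equiv.Perm.sign (AltX n j) = 1 := by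
  unfold AltX
  split
  · rw [map_mul, Equiv.Perm.sign_swap, Equiv.Perm.sign_swap]
    · decide
    · simp only [ne_eq, Fin.mk.injEq]; omega
    · simp only [ne_eq, Fin.mk.injEq]; omega
  · simp

lemma AltC_sign (n i : ℕ) : Equiv.Perm.sign (AltC n i) = 1 := by
  unfold AltC
  split
  · rw [map_mul, Equiv.Perm.sign_swap, Equiv.Perm.sign_swap]
    · decide
    · simp only [ne_eq, Fin.mk.injEq]; omega
    · simp only [ne_eq, Fin.mk.injEq]; omega
  · simp

def AltXe (n j : ℕ) : alternatingGroup (Fin n) :=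
  ⟨AltX n j, (Equiv.Perm.mem_alternatingGroup).2 (AltX_sign n j)⟩

def AltCe (n i : ℕ) : alternatingGroup (Fin n) :=
  ⟨AltC n i, (Equiv.Perm.mem_alternatingGroup).2 (AltC_sign n i)⟩

lemma disjoint_AltX_AltC {n j i : ℕ} (hji : j < i) :
    (AltX n j).Disjoint (AltC n i) := by
  rintro ⟨p, hp⟩
  unfold AltX AltC
  split
  · split
    · rename_i hj4 hi4
      by_cases hpj : 4*j ≤ p ∧ p ≤ 4*j+3
      · right
        have e1 : Equiv.swap (⟨4*i+1, by omega⟩ : Fin n) ⟨4*i+2, by omega⟩ ⟨p, hp⟩ = ⟨p, hp⟩ :=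
          Equiv.swap_apply_of_ne_of_ne (by simp only [ne_eq, Fin.mk.injEq]; omega)
            (by simp only [ne_eq, Fin.mk.injEq]; omega)
        have e2 : Equiv.swap (⟨4*i, by omega⟩ : Fin n) ⟨4*i+1, by omega⟩ ⟨p, hp⟩ = ⟨p, hp⟩ :=
          Equiv.swap_apply_of_ne_of_ne (by simp only [ne_eq, Fin.mk.injEq]; omega)
            (by simp only [ne_eq, Fin.mk.injEq]; omega)
        rw [Equiv.Perm.mul_apply, e1, e2]
      · left
        have e1 : Equiv.swap (⟨4*j+2, by omega⟩ : Fin n) ⟨4*j+3, by omega⟩ ⟨p, hp⟩ = ⟨p, hp⟩ :=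
          Equiv.swap_apply_of_ne_of_ne (by simp only [ne_eq, Fin.mk.injEq]; omega)
            (by simp only [ne_eq, Fin.mk.injEq]; omega)
        have e2 : Equiv.swap (⟨4*j, by omega⟩ : Fin n) ⟨4*j+1, by omega⟩ ⟨p, hp⟩ = ⟨p, hp⟩ :=
          Equiv.swap_apply_of_ne_of_ne (by simp only [ne_eq, Fin.mk.injEq]; omega)
            (by simp only [ne_eq, Fin.mk.injEq]; omega)
        rw [Equiv.Perm.mul_apply, e1, e2]
    · right; rfl
  · left; rfl

lemma not_commute_AltX_AltC {n i : ℕ} (h : 4*i+3 < n) :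
    AltX n i * AltC n i ≠ AltC n i * AltX n i := by
  intro hcomm
  set p0 : Fin n := ⟨4*i, by omega⟩ with hp0
  set p1 : Fin n := ⟨4*i+1, by omega⟩ with hp1
  set p2 : Fin n := ⟨4*i+2, by omega⟩ with hp2
  set p3 : Fin n := ⟨4*i+3, by omega⟩ with hp3
  have key : (AltX n i * AltC n i) p0 = (AltC n i * AltX n i) p0 := by rw [hcomm]
  unfold AltX AltC at key
  rw [dif_pos h, dif_pos h] at key
  simp only [Equiv.Perm.mul_apply] at key
  have ne01 : p0 ≠ p1 := by simp only [hp0, hp1, ne_eq, Fin.mk.injEq]; omega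
  have ne02 : p0 ≠ p2 := by simp only [hp0, hp2, ne_eq, Fin.mk.injEq]; omega
  have ne03 : p0 ≠ p3 := by simp only [hp0, hp3, ne_eq, Fin.mk.injEq]; omega
  have ne12 : p1 ≠ p2 := by simp only [hp1, hp2, ne_eq, Fin.mk.injEq]; omega
  have ne13 : p1 ≠ p3 := by simp only [hp1, hp3, ne_eq, Fin.mk.injEq]; omega
  have ne20 : p2 ≠ p0 := ne02.symm
  have e1 : Equiv.swap p1 p2 p0 = p0 := Equiv.swap_apply_of_ne_of_ne ne01 ne02
  have e2 : Equiv.swap p2 p3 p0 = p0 := Equiv.swap_apply_of_ne_of_ne ne02 ne03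
  have e3 : Equiv.swap p0 p1 p0 = p1 := Equiv.swap_apply_left _ _
  have e4 : Equiv.swap p2 p3 p1 = p1 := Equiv.swap_apply_of_ne_of_ne ne12 ne13
  have e5 : Equiv.swap p1 p2 p1 = p2 := Equiv.swap_apply_left _ _
  have e6 : Equiv.swap p0 p1 p1 = p0 := Equiv.swap_apply_right _ _
  have e7 : Equiv.swap p0 p1 p2 = p2 := Equiv.swap_apply_of_ne_of_ne ne20 ne12.symm
  rw [e1, e3, e4, e6, e2, e3, e5, e7] at key
  exact ne02 key

end AltCentralizerAux

open AltCentralizerAux in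
/-- For `n ≥ 8`, the alternating group `Alt(n)` admits a strictly descending chain of
centralizers of length at least `⌊n/4⌋`; consequently for every `k` there is an `n`
such that `Alt(n)` has centralizer dimension greater than `k` (i.e. admits a strictly
descending chain of centralizers of length `k + 1`). -/
theorem alternating_centralizer_chains :
    (∀ n : ℕ, 8 ≤ n →
      ∃ A : Fin (n / 4 + 1) → Set ↥(alternatingGroup (Fin n)),
        ∀ i : Fin (n / 4),
          Subgroup.centralizer (A i.succ) < Subgroup.centralizer (A i.castSucc))
    ∧ (∀ k : ℕ, ∃ n : ℕ,
        ∃ A : Fin (k + 2) → Set ↥(alternatingGroup (Fin n)),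
          ∀ i : Fin (k + 1),
            Subgroup.centralizer (A i.succ) < Subgroup.centralizer (A i.castSucc)) := by
  have main : ∀ n : ℕ, 8 ≤ n →
      ∃ A : Fin (n / 4 + 1) → Set ↥(alternatingGroup (Fin n)),
        ∀ i : Fin (n / 4),
          Subgroup.centralizer (A i.succ) < Subgroup.centralizer (A i.castSucc) := by
    intro n hn
    refine ⟨fun m => AltXe n '' Set.Iio m.val, fun i => ?_⟩
    have hi4 : 4 * i.val + 3 < n := by
      have := i.isLt; omega
    rw [SetLike.lt_iff_le_and_exists]
    constructor
    · apply Subgroup.centralizer_le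
      apply Set.image_mono
      intro j hj
      simp only [Set.mem_Iio] at *
      simp only [Fin.val_succ, Fin.coe_castSucc] at *
      omega
    · refine ⟨AltCe n i.val, ?_, ?_⟩
      · rw [Subgroup.mem_centralizer_iff]
        rintro g ⟨j, hj, rfl⟩
        simp only [Set.mem_Iio, Fin.coe_castSucc] at hj
        ext1
        exact (disjoint_AltX_AltC hj).commute
      · intro hmem
        rw [Subgroup.mem_centralizer_iff] at hmem
        have hx : AltXe n i.val ∈ AltXe n '' Set.Iio (i.succ : Fin (n/4+1)).val := by
          exact ⟨i.val, by simp, rfl⟩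
        have := hmem _ hx
        exact not_commute_AltX_AltC hi4 (congrArg Subtype.val this)
  refine ⟨main, fun k => ?_⟩
  obtain ⟨A, hA⟩ := main (4*k+8) (by omega)
  have hdiv : (4*k+8)/4 = k+2 := by omega
  refine ⟨4*k+8, fun m => A ⟨m.val, by omega⟩, fun i => ?_⟩
  exact hA ⟨i.val, by omega⟩
end
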